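/- arXiv:2211.16131 — 2 statements merged into one kernel-verified Lean document; each statement's English description precedes it below -/
import Mathlib

section
/- Let $\alpha \in (1, 2)$, $\mu$ a non-zero finite measure on $S^{d-1}$ satisfying $\eta |\lambda|^2 \leq \int_{S^{d-1}} |\langle \lambda, \theta\rangle|^2 \, d\mu(\theta)$ for all $\lambda \in \mathbb{R}^d$ and some $\eta > 0$, and let $\psi_1(q) = \int_{S^{d-1}} \int_0^1 (e^{i r \langle q, \theta\rangle} - 1 - i r \langle q, \theta \rangle)\, \frac{dr}{r^{1+\alpha}}\, d\mu(\theta)$. Then there exists $\eta' > 0$ such that for all $q \in \mathbb{R}^d$, $\mathrm{Re}(\psi_1(q)) \leq -\eta' (|q|^\alpha \wedge |q|^2)$. -/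
open MeasureTheory Complex
open scoped RealInnerProductSpace

/-!
Since `cos ≤ 1`, every part of `Re ψ₁(q) = ∫∫ (cos (r x) - 1) r^(-1-α) dr dμ`, `x = ⟪q, θ⟫`, is
nonpositive. For a fixed direction keep only `r ≤ min 1 |x|⁻¹`: there `|r x| ≤ 1`, so
`cos (r x) - 1 ≤ -(2/π²) (r x)²`, and integrating `r^(1-α)` up to that cut-off gives
`-c · min (|x|^α) (x²)`. Since `|x| ≤ ‖q‖` and `s ↦ min 1 (s^(α-2))` is nonincreasing,
`min (|x|^α) (x²) ≥ min 1 (‖q‖^(α-2)) · x²`; the non-degeneracy condition bounds `∫ x² dμ`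
below by `η ‖q‖²`, and `min 1 (‖q‖^(α-2)) · ‖q‖² = min (‖q‖^α) (‖q‖²)`.
-/

open Set

lemma norm_exp_I_mul_ofReal_sub_one_sub_le (t : ℝ) :
    ‖exp (I * t) - 1 - I * t‖ ≤ 2 * t ^ 2 := by
  have hIt : ‖I * (t : ℂ)‖ = |t| := by simp
  rcases le_or_gt |t| 1 with ht | ht
  · calc ‖exp (I * t) - 1 - I * t‖ ≤ ‖I * (t : ℂ)‖ ^ 2 :=
          norm_exp_sub_one_sub_id_le (hIt ▸ ht)
      _ ≤ 2 * t ^ 2 := by rw [hIt, sq_abs]; nlinarith [sq_nonneg t]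
  · calc ‖exp (I * t) - 1 - I * t‖ ≤ ‖exp (I * t) - 1‖ + ‖I * (t : ℂ)‖ := norm_sub_le _ _
      _ ≤ |t| + |t| := by rw [hIt]; gcongr; exact Real.norm_exp_I_mul_ofReal_sub_one_le
      _ ≤ 2 * t ^ 2 := by nlinarith [sq_abs t]

section RealPowers

variable {α : ℝ}

lemma min_rpow_sq_eq_min_one_rpow_mul_sq {Q : ℝ} (hQ : 0 ≤ Q) :
    min (Q ^ α) (Q ^ 2) = min 1 (Q ^ (α - 2)) * Q ^ 2 := by
  rcases hQ.eq_or_lt with rfl | hQ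
  · simp [Real.rpow_nonneg le_rfl α]
  rw [min_mul_of_nonneg _ _ (sq_nonneg Q), one_mul, ← Real.rpow_natCast, ← Real.rpow_add hQ]
  norm_num [min_comm]

lemma min_one_rpow_mul_sq_le {t Q : ℝ} (hα : α ≤ 2) (ht : |t| ≤ Q) :
    min 1 (Q ^ (α - 2)) * t ^ 2 ≤ min (|t| ^ α) (t ^ 2) := by
  rcases eq_or_ne t 0 with rfl | ht0
  · simp [Real.rpow_nonneg le_rfl α]
  rw [← sq_abs t, min_rpow_sq_eq_min_one_rpow_mul_sq (abs_nonneg t)]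
  exact mul_le_mul_of_nonneg_right (min_le_min_left 1
    (Real.rpow_le_rpow_of_nonpos (abs_pos.2 ht0) ht (by linarith))) (sq_nonneg _)

lemma min_rpow_sq_le_sq_mul_min_one_inv_rpow {x : ℝ} (hx : x ≠ 0) :
    min (|x| ^ α) (x ^ 2) ≤ x ^ 2 * (min 1 |x|⁻¹) ^ (2 - α) := by
  rcases min_choice 1 |x|⁻¹ with h | h <;> rw [h]
  · simp
  · rw [Real.inv_rpow (abs_nonneg x), ← Real.rpow_neg (abs_nonneg x), ← sq_abs x,
      ← Real.rpow_natCast, ← Real.rpow_add (abs_pos.2 hx)]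
    norm_num

lemma sq_mul_rpow_neg_one_add {r : ℝ} (hr : 0 < r) :
    r ^ 2 * r ^ (-(1 + α)) = r ^ (1 - α) := by
  rw [← Real.rpow_natCast, ← Real.rpow_add hr]; norm_num; ring_nf

lemma integrableOn_rpow_one_sub_Ioc (hα : α < 2) (b : ℝ) :
    IntegrableOn (fun r : ℝ => r ^ (1 - α)) (Ioc 0 b) :=
  (intervalIntegral.intervalIntegrable_rpow' (by linarith)).1

lemma integral_rpow_one_sub_Ioc (hα : α < 2) {b : ℝ} (hb : 0 ≤ b) :
    ∫ r in Ioc 0 b, r ^ (1 - α) = b ^ (2 - α) / (2 - α) := by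
  rw [← intervalIntegral.integral_of_le hb, integral_rpow (Or.inl (by linarith)),
    show 1 - α + 1 = 2 - α by ring, Real.zero_rpow (by linarith), sub_zero]

lemma cos_mul_sub_one_mul_rpow_le {x r : ℝ} (hr : 0 < r) (hrx : r * |x| ≤ 1) :
    (Real.cos (r * x) - 1) * r ^ (-(1 + α)) ≤ -(2 / Real.pi ^ 2) * x ^ 2 * r ^ (1 - α) := by
  have hπ : |r * x| ≤ Real.pi := by
    rw [abs_mul, abs_of_pos hr]; linarith [Real.pi_gt_three]
  calc (Real.cos (r * x) - 1) * r ^ (-(1 + α))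
      ≤ (-(2 / Real.pi ^ 2) * (r * x) ^ 2) * r ^ (-(1 + α)) := by
        gcongr; linarith [Real.cos_le_one_sub_mul_cos_sq hπ]
    _ = -(2 / Real.pi ^ 2) * x ^ 2 * (r ^ 2 * r ^ (-(1 + α))) := by ring
    _ = -(2 / Real.pi ^ 2) * x ^ 2 * r ^ (1 - α) := by rw [sq_mul_rpow_neg_one_add hr]

end RealPowers

lemma integrable_sq_of_abs_le {Ω : Type*} [MeasurableSpace Ω] {μ : Measure Ω}
    [IsFiniteMeasure μ] {x : Ω → ℝ} (hx : Measurable x) {Q : ℝ} (hQ : ∀ ω, |x ω| ≤ Q) :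
    Integrable (fun ω => x ω ^ 2) μ :=
  (integrable_const (Q ^ 2)).mono' (hx.pow_const 2).aestronglyMeasurable
    (.of_forall fun ω => by simpa using sq_le_sq' (abs_le.1 (hQ ω)).1 (abs_le.1 (hQ ω)).2)

noncomputable def stableIntegrand (α x r : ℝ) : ℂ :=
  (exp (I * ((r * x : ℝ) : ℂ)) - 1 - I * ((r * x : ℝ) : ℂ)) * ((r ^ (-(1 + α)) : ℝ) : ℂ)

section StableIntegrand

variable {α : ℝ}

lemma re_stableIntegrand (x r : ℝ) :
    (stableIntegrand α x r).re = (Real.cos (r * x) - 1) * r ^ (-(1 + α)) := by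
  simp [stableIntegrand, mul_re, exp_re, exp_im]

lemma norm_stableIntegrand_le (x : ℝ) {r : ℝ} (hr : 0 < r) :
    ‖stableIntegrand α x r‖ ≤ 2 * x ^ 2 * r ^ (1 - α) := by
  rw [stableIntegrand, norm_mul, norm_real, Real.norm_of_nonneg (by positivity),
    ← sq_mul_rpow_neg_one_add hr]
  calc _ ≤ 2 * (r * x) ^ 2 * r ^ (-(1 + α)) := by
        gcongr; exact norm_exp_I_mul_ofReal_sub_one_sub_le _
    _ = _ := by ring

lemma measurable_uncurry_stableIntegrand (α : ℝ) :
    Measurable (Function.uncurry (stableIntegrand α)) := by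
  unfold stableIntegrand; fun_prop

lemma integrableOn_stableIntegrand (hα : α < 2) (x : ℝ) :
    IntegrableOn (stableIntegrand α x) (Ioc 0 1) := by
  refine ((integrableOn_rpow_one_sub_Ioc hα 1).const_mul (2 * x ^ 2)).mono'
    (measurable_uncurry_stableIntegrand α).of_uncurry_left.aestronglyMeasurable ?_
  filter_upwards [ae_restrict_mem measurableSet_Ioc] with r hr
  exact norm_stableIntegrand_le x hr.1

lemma measurable_integral_stableIntegrand (α : ℝ) :
    Measurable fun x => ∫ r in Ioc 0 1, stableIntegrand α x r :=
  (measurable_uncurry_stableIntegrand α).stronglyMeasurable.integral_prod_right'.measurable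

lemma norm_integral_stableIntegrand_le (hα : α < 2) (x : ℝ) :
    ‖∫ r in Ioc 0 1, stableIntegrand α x r‖ ≤ 2 * x ^ 2 / (2 - α) := by
  refine (norm_integral_le_of_norm_le
    ((integrableOn_rpow_one_sub_Ioc hα 1).const_mul (2 * x ^ 2))
    ((ae_restrict_iff' measurableSet_Ioc).2 (.of_forall fun r hr =>
      norm_stableIntegrand_le x hr.1))).trans_eq ?_
  rw [integral_const_mul, integral_rpow_one_sub_Ioc hα zero_le_one, Real.one_rpow, mul_one_div]

lemma re_integral_stableIntegrand (hα : α < 2) (x : ℝ) :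
    (∫ r in Ioc 0 1, stableIntegrand α x r).re
      = ∫ r in Ioc 0 1, (Real.cos (r * x) - 1) * r ^ (-(1 + α)) := by
  have h := integral_re (integrableOn_stableIntegrand hα x)
  simp only [RCLike.re_to_complex, re_stableIntegrand] at h
  exact h.symm

theorem re_integral_stableIntegrand_le (hα : α < 2) (x : ℝ) :
    (∫ r in Ioc 0 1, stableIntegrand α x r).re
      ≤ -(2 / (Real.pi ^ 2 * (2 - α))) * min (|x| ^ α) (x ^ 2) := by
  rw [re_integral_stableIntegrand hα]
  rcases eq_or_ne x 0 with rfl | hx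
  · simp [Real.rpow_nonneg le_rfl α]
  have hf : IntegrableOn (fun r => (stableIntegrand α x r).re) (Ioc 0 1) :=
    (integrableOn_stableIntegrand hα x).re
  simp only [re_stableIntegrand] at hf
  set f : ℝ → ℝ := fun r => (Real.cos (r * x) - 1) * r ^ (-(1 + α))
  set b := min 1 |x|⁻¹
  have hb : 0 < b := lt_min one_pos (by positivity)
  have hf_nonpos : ∀ r ∈ Ioc (0 : ℝ) 1, f r ≤ 0 := fun r hr =>
    mul_nonpos_of_nonpos_of_nonneg (by linarith [Real.cos_le_one (r * x)])
      (Real.rpow_nonneg hr.1.le _)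
  have hsub : Ioc 0 b ⊆ Ioc (0 : ℝ) 1 := Ioc_subset_Ioc_right (min_le_left _ _)
  have h_cutoff : ∫ r in Ioc 0 1, f r ≤ ∫ r in Ioc 0 b, f r := by
    have := setIntegral_mono_set hf.neg ((ae_restrict_iff' measurableSet_Ioc).2
      (.of_forall fun r hr => neg_nonneg.2 (hf_nonpos r hr))) hsub.eventuallyLE
    simp only [Pi.neg_apply, integral_neg] at this
    linarith
  have h_quadratic :
      ∫ r in Ioc 0 b, f r ≤ ∫ r in Ioc 0 b, -(2 / Real.pi ^ 2) * x ^ 2 * r ^ (1 - α) := by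
    refine setIntegral_mono_on (hf.mono_set hsub)
      ((integrableOn_rpow_one_sub_Ioc hα b).const_mul _) measurableSet_Ioc
      fun r hr => cos_mul_sub_one_mul_rpow_le hr.1 ?_
    calc r * |x| ≤ |x|⁻¹ * |x| := by gcongr; exact hr.2.trans (min_le_right _ _)
      _ = 1 := inv_mul_cancel₀ (abs_ne_zero.2 hx)
  rw [integral_const_mul, integral_rpow_one_sub_Ioc hα hb.le] at h_quadratic
  have h2α : 0 < 2 - α := by linarith
  calc ∫ r in Ioc 0 1, f r
      ≤ -(2 / Real.pi ^ 2) * x ^ 2 * (b ^ (2 - α) / (2 - α)) := by linarith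
    _ = -(2 / (Real.pi ^ 2 * (2 - α))) * (x ^ 2 * b ^ (2 - α)) := by field_simp
    _ ≤ -(2 / (Real.pi ^ 2 * (2 - α))) * min (|x| ^ α) (x ^ 2) :=
        mul_le_mul_of_nonpos_left (min_rpow_sq_le_sq_mul_min_one_inv_rpow hx)
          (neg_nonpos.2 (by positivity))

theorem re_integral_integral_stableIntegrand_le {Ω : Type*} [MeasurableSpace Ω]
    {μ : Measure Ω} [IsFiniteMeasure μ] (hα : α < 2) {x : Ω → ℝ} (hx : Measurable x) {Q : ℝ}
    (hQ : ∀ ω, |x ω| ≤ Q) :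
    (∫ ω, (∫ r in Ioc 0 1, stableIntegrand α (x ω) r) ∂μ).re
      ≤ -(2 / (Real.pi ^ 2 * (2 - α))) * min 1 (Q ^ (α - 2)) * ∫ ω, x ω ^ 2 ∂μ := by
  have hx2 := integrable_sq_of_abs_le (μ := μ) hx hQ
  have hψ : Integrable (fun ω => ∫ r in Ioc 0 1, stableIntegrand α (x ω) r) μ :=
    (hx2.const_mul (2 / (2 - α))).mono'
      ((measurable_integral_stableIntegrand α).comp hx).aestronglyMeasurable
      (.of_forall fun ω => (norm_integral_stableIntegrand_le hα _).trans_eq (by ring))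
  have hc : 0 ≤ 2 / (Real.pi ^ 2 * (2 - α)) :=
    div_nonneg zero_le_two (mul_nonneg (sq_nonneg _) (by linarith))
  rw [← integral_const_mul]
  refine (integral_re hψ).symm.trans_le <| integral_mono hψ.re (hx2.const_mul _) fun ω =>
    (re_integral_stableIntegrand_le hα _).trans ?_
  rw [mul_assoc]
  exact mul_le_mul_of_nonpos_left (min_one_rpow_mul_sq_le hα.le (hQ ω)) (neg_nonpos.2 hc)

end StableIntegrand

theorem stmt_12_general (d : ℕ) (α : ℝ) (hα2 : α < 2)
    (μ : Measure (Metric.sphere (0 : EuclideanSpace ℝ (Fin d)) 1)) [IsFiniteMeasure μ]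
    (η : ℝ) (hη : 0 < η)
    (hND : ∀ lam : EuclideanSpace ℝ (Fin d),
      η * ‖lam‖ ^ 2 ≤ ∫ θ : Metric.sphere (0 : EuclideanSpace ℝ (Fin d)) 1,
        (⟪lam, (θ : EuclideanSpace ℝ (Fin d))⟫ : ℝ) ^ 2 ∂μ) :
    ∃ η' : ℝ, 0 < η' ∧ ∀ q : EuclideanSpace ℝ (Fin d),
      (∫ θ : Metric.sphere (0 : EuclideanSpace ℝ (Fin d)) 1,
        (∫ r in Set.Ioc (0 : ℝ) 1,
          ((Complex.exp (Complex.I * ((r * ⟪q, (θ : EuclideanSpace ℝ (Fin d))⟫ : ℝ) : ℂ))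
              - 1 - Complex.I * ((r * ⟪q, (θ : EuclideanSpace ℝ (Fin d))⟫ : ℝ) : ℂ))
            * ((r ^ (-(1 + α)) : ℝ) : ℂ))) ∂μ).re
        ≤ -η' * min (‖q‖ ^ α) (‖q‖ ^ 2) := by
  set c := 2 / (Real.pi ^ 2 * (2 - α))
  have hc : 0 < c := div_pos two_pos (mul_pos (by positivity) (by linarith))
  refine ⟨c * η, mul_pos hc hη, fun q => ?_⟩
  have hinner : ∀ θ : Metric.sphere (0 : EuclideanSpace ℝ (Fin d)) 1,
      |⟪q, (θ : EuclideanSpace ℝ (Fin d))⟫| ≤ ‖q‖ := fun θ => by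
    simpa [norm_eq_of_mem_sphere θ] using abs_real_inner_le_norm q (θ : EuclideanSpace ℝ (Fin d))
  have hm : 0 ≤ min 1 (‖q‖ ^ (α - 2)) := le_min zero_le_one (by positivity)
  calc _ ≤ -c * min 1 (‖q‖ ^ (α - 2)) * ∫ θ, ⟪q, (θ : EuclideanSpace ℝ (Fin d))⟫ ^ 2 ∂μ :=
        re_integral_integral_stableIntegrand_le hα2
          (continuous_const.inner continuous_subtype_val).measurable hinner
    _ ≤ -c * min 1 (‖q‖ ^ (α - 2)) * (η * ‖q‖ ^ 2) :=
        mul_le_mul_of_nonpos_left (hND q) (mul_nonpos_of_nonpos_of_nonneg (by linarith) hm)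
    _ = -(c * η) * min (‖q‖ ^ α) (‖q‖ ^ 2) := by
        rw [min_rpow_sq_eq_min_one_rpow_mul_sq (norm_nonneg q)]; ring

/-- The truncated symbol `ψ₁` of a non-degenerate `α`-stable Lévy measure satisfies
`Re ψ₁(q) ≤ -η' (|q|^α ∧ |q|^2)`. -/
theorem stmt_12 (d : ℕ) (α : ℝ) (hα : 1 < α) (hα2 : α < 2)
    (μ : Measure (Metric.sphere (0 : EuclideanSpace ℝ (Fin d)) 1)) [IsFiniteMeasure μ]
    (hμ : μ ≠ 0)
    (η : ℝ) (hη : 0 < η)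
    (hND : ∀ lam : EuclideanSpace ℝ (Fin d),
      η * ‖lam‖ ^ 2 ≤ ∫ θ : Metric.sphere (0 : EuclideanSpace ℝ (Fin d)) 1,
        (⟪lam, (θ : EuclideanSpace ℝ (Fin d))⟫ : ℝ) ^ 2 ∂μ) :
    ∃ η' : ℝ, 0 < η' ∧ ∀ q : EuclideanSpace ℝ (Fin d),
      (∫ θ : Metric.sphere (0 : EuclideanSpace ℝ (Fin d)) 1,
        (∫ r in Set.Ioc (0 : ℝ) 1,
          ((Complex.exp (Complex.I * ((r * ⟪q, (θ : EuclideanSpace ℝ (Fin d))⟫ : ℝ) : ℂ))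
              - 1 - Complex.I * ((r * ⟪q, (θ : EuclideanSpace ℝ (Fin d))⟫ : ℝ) : ℂ))
            * ((r ^ (-(1 + α)) : ℝ) : ℂ))) ∂μ).re
        ≤ -η' * min (‖q‖ ^ α) (‖q‖ ^ 2) :=
  stmt_12_general d α hα2 μ η hη hND
end

section
/- Fix $t \in (0, T]$, a probability measure $\mu \in \mathcal{P}_1(\mathbb{R}^d)$, matrices $A, K_t \in M_d(\mathbb{R})$, and a density $p(t, \cdot) \in \mathcal{S}(\mathbb{R}^d)$. Define $q(\mu, t, y) = \int_{\mathbb{R}^d} p(t, y - e^{tA}x - K_t M(\mu))\, d\mu(x)$ where $M(\mu) = \int x\, d\mu(x)$. Then for fixed $t$ and $y$, the map $\mu \mapsto q(\mu, t, y)$ admits a linear derivative given by $\frac{\delta q}{\delta m}(\mu, t, y)(v) = p(t, y - e^{tA}v - K_t M(\mu)) - \int_{\mathbb{R}^d} \partial_y p(t, y - e^{tA}x - K_t M(\mu)) \cdot (K_t v)\, d\mu(x)$. -/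
/-!
Along the segment `m_λ = λμ + (1 - λ)ν` the mean is affine in `λ`, so with `w = C M(μ) - C M(ν)`
and `c x = φ x - C M(ν)` we get `q(m_λ) = λ P_μ(λ) + (1 - λ) P_ν(λ)`, where
`P_σ(λ) = ∫ p(c x - λ w) dσ(x)`. Since `p` and `∇p` are bounded and continuous, `P_σ` may be
differentiated under the integral, and the fundamental theorem of calculus on `[0, 1]` gives
`q(μ) - q(ν)`. The candidate derivative pairs with `μ - ν` to exactly this derivative: its second
term is linear in `v`, so integrating it against `σ` only sees the mean `M(σ)`.
-/

open MeasureTheory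
open scoped ENNReal RealInnerProductSpace SchwartzMap BoundedContinuousFunction

theorem MeasureTheory.integral_ofReal_smul_add_ofReal_smul {α F : Type*} [MeasurableSpace α]
    [NormedAddCommGroup F] [NormedSpace ℝ F] {μ ν : Measure α} {f : α → F} {a b : ℝ}
    (ha : 0 ≤ a) (hb : 0 ≤ b) (hfμ : Integrable f μ) (hfν : Integrable f ν) :
    ∫ x, f x ∂(ENNReal.ofReal a • μ + ENNReal.ofReal b • ν)
      = a • ∫ x, f x ∂μ + b • ∫ x, f x ∂ν := by
  rw [integral_add_measure (hfμ.smul_measure ENNReal.ofReal_ne_top)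
      (hfν.smul_measure ENNReal.ofReal_ne_top), integral_smul_measure, integral_smul_measure,
    ENNReal.toReal_ofReal ha, ENNReal.toReal_ofReal hb]

theorem MeasureTheory.integral_sub_integral_inner_eq {E F : Type*} [NormedAddCommGroup E]
    [NormedSpace ℝ E] [CompleteSpace E] [MeasurableSpace E] [NormedAddCommGroup F]
    [InnerProductSpace ℝ F] [CompleteSpace F] {σ m : Measure E} {f : E → ℝ} {G : E → F}
    (L : E →L[ℝ] F) (hf : Integrable f σ) (hG : Integrable G m) (hσ : Integrable id σ) :
    ∫ v, (f v - ∫ x, ⟪G x, L v⟫ ∂m) ∂σ = (∫ v, f v ∂σ) - ⟪∫ x, G x ∂m, L (∫ v, v ∂σ)⟫ := by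
  have hinner : ∀ v, ∫ x, ⟪G x, L v⟫ ∂m = ⟪∫ x, G x ∂m, L v⟫ := fun v => by
    simpa only [real_inner_comm] using integral_inner (𝕜 := ℝ) hG (L v)
  have hpair : ∫ v, ⟪∫ x, G x ∂m, L v⟫ ∂σ = ⟪∫ x, G x ∂m, L (∫ v, v ∂σ)⟫ :=
    ((innerSL ℝ (E := F) (∫ x, G x ∂m)).comp L).integral_comp_comm hσ
  have hint : Integrable (fun v => ⟪∫ x, G x ∂m, L v⟫) σ :=
    ((innerSL ℝ (E := F) (∫ x, G x ∂m)).comp L).integrable_comp hσ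
  simp only [hinner]
  rw [integral_sub hf hint, hpair]

namespace BoundedContinuousFunction

variable {X E F : Type*} [TopologicalSpace X] [MeasurableSpace X] [OpensMeasurableSpace X]
  [NormedAddCommGroup E] [NormedAddCommGroup F] [MeasurableSpace F] [BorelSpace F]
  [SecondCountableTopology F]

theorem integrable_comp (f : E →ᵇ F) {c : X → E} (hc : Continuous c) (σ : Measure X)
    [IsFiniteMeasure σ] : Integrable (fun x => f (c x)) σ :=
  (f.compContinuous ⟨c, hc⟩).integrable σ

theorem continuous_integral_comp_sub_smul [NormedSpace ℝ E] [NormedSpace ℝ F] (f : E →ᵇ F)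
    {c : X → E} (hc : Continuous c) (w : E) (σ : Measure X) [IsFiniteMeasure σ] :
    Continuous fun l : ℝ => ∫ x, f (c x - l • w) ∂σ :=
  continuous_of_dominated
    (fun l => (f.integrable_comp (c := fun x => c x - l • w) (hc.sub continuous_const) σ).1)
    (fun _ => .of_forall fun _ => f.norm_coe_le_norm _) (integrable_const ‖f‖)
    (.of_forall fun _ =>
      f.continuous.comp (continuous_const.sub (continuous_id.smul continuous_const)))

end BoundedContinuousFunction

namespace SchwartzMap

variable {E : Type*} [NormedAddCommGroup E] [InnerProductSpace ℝ E] [CompleteSpace E]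

noncomputable def gradientBCF (p : 𝓢(E, ℝ)) : E →ᵇ E :=
  (fderivCLM ℝ E ℝ p).toBoundedContinuousFunction.comp _
    (InnerProductSpace.toDual ℝ E).symm.lipschitz

theorem hasDerivAt_comp_sub_smul (p : 𝓢(E, ℝ)) (c w : E) (l : ℝ) :
    HasDerivAt (fun l : ℝ => p (c - l • w)) (-⟪w, gradient p (c - l • w)⟫) l := by
  have hline : HasDerivAt (fun l : ℝ => c - l • w) (-w) l := by
    simpa using ((hasDerivAt_id l).smul_const w).const_sub c
  have hcomp := p.differentiableAt.hasFDerivAt.comp_hasDerivAt l hline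
  rwa [map_neg, ← InnerProductSpace.toDual_symm_apply, real_inner_comm] at hcomp

variable [MeasurableSpace E] [BorelSpace E] [SecondCountableTopology E]
  {X : Type*} [TopologicalSpace X] [MeasurableSpace X] [OpensMeasurableSpace X]

theorem hasDerivAt_integral_comp_sub_smul (p : 𝓢(E, ℝ)) {c : X → E} (hc : Continuous c) (w : E)
    (σ : Measure X) [IsFiniteMeasure σ] (l : ℝ) :
    HasDerivAt (fun l : ℝ => ∫ x, p (c x - l • w) ∂σ)
      (-⟪w, ∫ x, gradient p (c x - l • w) ∂σ⟫) l := by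
  have hcw : ∀ l : ℝ, Continuous fun x => c x - l • w := fun _ => hc.sub continuous_const
  have hpInt : ∀ l : ℝ, Integrable (fun x => p (c x - l • w)) σ := fun l =>
    p.toBoundedContinuousFunction.integrable_comp (hcw l) σ
  have hgradInt : Integrable (fun x => gradient p (c x - l • w)) σ :=
    p.gradientBCF.integrable_comp (hcw l) σ
  have hbound : ∀ x (l' : ℝ), ‖-⟪w, gradient p (c x - l' • w)⟫‖ ≤ ‖w‖ * ‖p.gradientBCF‖ :=
    fun x l' => (norm_neg _).trans_le <| (norm_inner_le_norm _ _).trans <|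
      mul_le_mul_of_nonneg_left (p.gradientBCF.norm_coe_le_norm _) (norm_nonneg w)
  have hderiv := (hasDerivAt_integral_of_dominated_loc_of_deriv_le
    (Metric.ball_mem_nhds l one_pos) (F' := fun (l : ℝ) (x : X) => -⟪w, gradient p (c x - l • w)⟫)
    (.of_forall fun l' => (hpInt l').1) (hpInt l) (hgradInt.const_inner w).neg.1
    (.of_forall fun x l' _ => hbound x l') (integrable_const _)
    (.of_forall fun x l' _ => p.hasDerivAt_comp_sub_smul (c x) w l')).2
  rwa [integral_neg, integral_inner hgradInt] at hderiv

theorem integral_comp_sub_sub_integral_comp_eq (p : 𝓢(E, ℝ)) {c : X → E} (hc : Continuous c)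
    (w : E) (μ ν : Measure X) [IsFiniteMeasure μ] [IsFiniteMeasure ν] :
    (∫ x, p (c x - w) ∂μ) - ∫ x, p (c x) ∂ν =
      ∫ l in (0 : ℝ)..1, ((∫ x, p (c x - l • w) ∂μ) - (∫ x, p (c x - l • w) ∂ν)
        - ⟪w, l • (∫ x, gradient p (c x - l • w) ∂μ)
            + (1 - l) • ∫ x, gradient p (c x - l • w) ∂ν⟫) := by
  -- `l * P μ l + (1 - l) * P ν l` is the integral of `p (c x - l • w)` against `lμ + (1 - l)ν`.
  set P : Measure X → ℝ → ℝ := fun σ l => ∫ x, p (c x - l • w) ∂σ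
  set G : Measure X → ℝ → E := fun σ l => ∫ x, gradient p (c x - l • w) ∂σ
  have hderiv : ∀ l : ℝ, HasDerivAt (fun l => l * P μ l + (1 - l) * P ν l)
      (P μ l - P ν l - ⟪w, l • G μ l + (1 - l) • G ν l⟫) l := by
    intro l
    refine (((hasDerivAt_id l).mul (p.hasDerivAt_integral_comp_sub_smul hc w μ l)).add
      (((hasDerivAt_id l).const_sub 1).mul
        (p.hasDerivAt_integral_comp_sub_smul hc w ν l))).congr_deriv ?_
    simp only [inner_add_right, real_inner_smul_right, id]
    ring
  have hcont : Continuous fun l => P μ l - P ν l - ⟪w, l • G μ l + (1 - l) • G ν l⟫ := by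
    have := p.toBoundedContinuousFunction.continuous_integral_comp_sub_smul hc w μ
    have := p.toBoundedContinuousFunction.continuous_integral_comp_sub_smul hc w ν
    have := p.gradientBCF.continuous_integral_comp_sub_smul hc w μ
    have := p.gradientBCF.continuous_integral_comp_sub_smul hc w ν
    fun_prop
  have hFTC := intervalIntegral.integral_eq_sub_of_hasDerivAt (fun l _ => hderiv l)
    (hcont.intervalIntegrable 0 1)
  simpa [P] using hFTC.symm

/-- With `φ x = y - e^{tA} x` and `C = K_t` this is `q(m, t, y)`; `meanFieldIntegralLinearDeriv`
is the candidate `δq/δm`. -/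
noncomputable def meanFieldIntegral (p : 𝓢(E, ℝ)) (φ : E → E) (C : E →L[ℝ] E)
    (m : Measure E) : ℝ :=
  ∫ x, p (φ x - C (∫ x', x' ∂m)) ∂m

noncomputable def meanFieldIntegralLinearDeriv (p : 𝓢(E, ℝ)) (φ : E → E) (C : E →L[ℝ] E)
    (m : Measure E) (v : E) : ℝ :=
  p (φ v - C (∫ x', x' ∂m)) - ∫ x, ⟪gradient p (φ x - C (∫ x', x' ∂m)), C v⟫ ∂m

theorem meanFieldIntegral_sub_eq_intervalIntegral (p : 𝓢(E, ℝ)) {φ : E → E} (hφ : Continuous φ)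
    (C : E →L[ℝ] E) (μ ν : Measure E) [IsFiniteMeasure μ] [IsFiniteMeasure ν]
    (hμ : Integrable id μ) (hν : Integrable id ν) :
    meanFieldIntegral p φ C μ - meanFieldIntegral p φ C ν =
      ∫ l in (0 : ℝ)..1,
        ((∫ v, meanFieldIntegralLinearDeriv p φ C
            (ENNReal.ofReal l • μ + ENNReal.ofReal (1 - l) • ν) v ∂μ)
          - ∫ v, meanFieldIntegralLinearDeriv p φ C
            (ENNReal.ofReal l • μ + ENNReal.ofReal (1 - l) • ν) v ∂ν) := by
  set w := C (∫ x, x ∂μ) - C (∫ x, x ∂ν)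
  set c : E → E := fun x => φ x - C (∫ x, x ∂ν)
  have hc : Continuous c := hφ.sub continuous_const
  calc meanFieldIntegral p φ C μ - meanFieldIntegral p φ C ν
      = (∫ x, p (c x - w) ∂μ) - ∫ x, p (c x) ∂ν := by
        simp only [meanFieldIntegral, c, w, sub_sub_sub_cancel_right]
    _ = _ := p.integral_comp_sub_sub_integral_comp_eq hc w μ ν
    _ = _ := intervalIntegral.integral_congr fun l hl => ?_
  rw [Set.uIcc_of_le zero_le_one] at hl
  obtain ⟨hl₀, hl₁⟩ : 0 ≤ l ∧ 0 ≤ 1 - l := ⟨hl.1, sub_nonneg.2 hl.2⟩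
  set m := ENNReal.ofReal l • μ + ENNReal.ofReal (1 - l) • ν
  have hshift : ∀ z, φ z - C (∫ x, x ∂m) = c z - l • w := fun z => by
    have hmean : ∫ x, x ∂m = l • ∫ x, x ∂μ + (1 - l) • ∫ x, x ∂ν :=
      integral_ofReal_smul_add_ofReal_smul hl₀ hl₁ hμ hν
    rw [hmean, map_add, map_smul, map_smul]
    simp only [c, w, smul_sub, sub_smul, one_smul]
    abel
  have hp : ∀ (σ : Measure E) [IsFiniteMeasure σ], Integrable (fun x => p (c x - l • w)) σ :=
    fun σ _ => p.toBoundedContinuousFunction.integrable_comp (hc.sub continuous_const) σ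
  have hG : ∀ (σ : Measure E) [IsFiniteMeasure σ],
      Integrable (fun x => gradient p (c x - l • w)) σ :=
    fun σ _ => p.gradientBCF.integrable_comp (hc.sub continuous_const) σ
  have hGm : Integrable (fun x => gradient p (c x - l • w)) m :=
    ((hG μ).smul_measure ENNReal.ofReal_ne_top).add_measure
      ((hG ν).smul_measure ENNReal.ofReal_ne_top)
  simp only [meanFieldIntegralLinearDeriv, hshift]
  rw [integral_sub_integral_inner_eq C (hp μ) hGm hμ,
    integral_sub_integral_inner_eq C (hp ν) hGm hν,
    integral_ofReal_smul_add_ofReal_smul hl₀ hl₁ (hG μ) (hG ν), real_inner_comm _ w,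
    inner_sub_right]
  ring

end SchwartzMap

theorem stmt_14_general (d : ℕ) (t : ℝ)
    (A Kt : Matrix (Fin d) (Fin d) ℝ)
    (p : SchwartzMap (EuclideanSpace ℝ (Fin d)) ℝ)
    (y : EuclideanSpace ℝ (Fin d)) :
    ∀ μ ν : Measure (EuclideanSpace ℝ (Fin d)),
      IsProbabilityMeasure μ → IsProbabilityMeasure ν →
      Integrable (id : EuclideanSpace ℝ (Fin d) → EuclideanSpace ℝ (Fin d)) μ →
      Integrable (id : EuclideanSpace ℝ (Fin d) → EuclideanSpace ℝ (Fin d)) ν →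
      (∫ x, p (y - Matrix.toEuclideanCLM (𝕜 := ℝ) (NormedSpace.exp (t • A)) x
            - Matrix.toEuclideanCLM (𝕜 := ℝ) Kt (∫ x', x' ∂μ)) ∂μ)
        - (∫ x, p (y - Matrix.toEuclideanCLM (𝕜 := ℝ) (NormedSpace.exp (t • A)) x
            - Matrix.toEuclideanCLM (𝕜 := ℝ) Kt (∫ x', x' ∂ν)) ∂ν)
      = ∫ lam in (0 : ℝ)..1,
          ((∫ v, (p (y - Matrix.toEuclideanCLM (𝕜 := ℝ) (NormedSpace.exp (t • A)) v
              - Matrix.toEuclideanCLM (𝕜 := ℝ) Kt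
                  (∫ x', x' ∂(ENNReal.ofReal lam • μ + ENNReal.ofReal (1 - lam) • ν)))
            - ∫ x, ⟪gradient (⇑p)
                (y - Matrix.toEuclideanCLM (𝕜 := ℝ) (NormedSpace.exp (t • A)) x
                  - Matrix.toEuclideanCLM (𝕜 := ℝ) Kt
                      (∫ x', x' ∂(ENNReal.ofReal lam • μ + ENNReal.ofReal (1 - lam) • ν))),
                Matrix.toEuclideanCLM (𝕜 := ℝ) Kt v⟫
              ∂(ENNReal.ofReal lam • μ + ENNReal.ofReal (1 - lam) • ν)) ∂μ)
          - ∫ v, (p (y - Matrix.toEuclideanCLM (𝕜 := ℝ) (NormedSpace.exp (t • A)) v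
              - Matrix.toEuclideanCLM (𝕜 := ℝ) Kt
                  (∫ x', x' ∂(ENNReal.ofReal lam • μ + ENNReal.ofReal (1 - lam) • ν)))
            - ∫ x, ⟪gradient (⇑p)
                (y - Matrix.toEuclideanCLM (𝕜 := ℝ) (NormedSpace.exp (t • A)) x
                  - Matrix.toEuclideanCLM (𝕜 := ℝ) Kt
                      (∫ x', x' ∂(ENNReal.ofReal lam • μ + ENNReal.ofReal (1 - lam) • ν))),
                Matrix.toEuclideanCLM (𝕜 := ℝ) Kt v⟫
              ∂(ENNReal.ofReal lam • μ + ENNReal.ofReal (1 - lam) • ν)) ∂ν) := by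
  intro μ ν _ _ hμ hν
  exact p.meanFieldIntegral_sub_eq_intervalIntegral
    (φ := fun x => y - Matrix.toEuclideanCLM (𝕜 := ℝ) (NormedSpace.exp (t • A)) x)
    (by fun_prop) (Matrix.toEuclideanCLM (𝕜 := ℝ) Kt) μ ν hμ hν

/-- The map `μ ↦ q(μ,t,y) = ∫ p(t, y - e^{tA}x - K_t M(μ)) dμ(x)` admits the linear
derivative `v ↦ p(t, y - e^{tA}v - K_t M(μ)) - ∫ ∂_y p(t, y - e^{tA}x - K_t M(μ)) ⋅ K_t v dμ(x)`,
i.e. the defining identity of the linear derivative holds with this candidate. -/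
theorem stmt_14 (d : ℕ) (T t : ℝ) (ht : 0 < t) (htT : t ≤ T)
    (A Kt : Matrix (Fin d) (Fin d) ℝ)
    (p : SchwartzMap (EuclideanSpace ℝ (Fin d)) ℝ)
    (y : EuclideanSpace ℝ (Fin d)) :
    ∀ μ ν : Measure (EuclideanSpace ℝ (Fin d)),
      IsProbabilityMeasure μ → IsProbabilityMeasure ν →
      Integrable (id : EuclideanSpace ℝ (Fin d) → EuclideanSpace ℝ (Fin d)) μ →
      Integrable (id : EuclideanSpace ℝ (Fin d) → EuclideanSpace ℝ (Fin d)) ν →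
      (∫ x, p (y - Matrix.toEuclideanCLM (𝕜 := ℝ) (NormedSpace.exp (t • A)) x
            - Matrix.toEuclideanCLM (𝕜 := ℝ) Kt (∫ x', x' ∂μ)) ∂μ)
        - (∫ x, p (y - Matrix.toEuclideanCLM (𝕜 := ℝ) (NormedSpace.exp (t • A)) x
            - Matrix.toEuclideanCLM (𝕜 := ℝ) Kt (∫ x', x' ∂ν)) ∂ν)
      = ∫ lam in (0 : ℝ)..1,
          ((∫ v, (p (y - Matrix.toEuclideanCLM (𝕜 := ℝ) (NormedSpace.exp (t • A)) v
              - Matrix.toEuclideanCLM (𝕜 := ℝ) Kt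
                  (∫ x', x' ∂(ENNReal.ofReal lam • μ + ENNReal.ofReal (1 - lam) • ν)))
            - ∫ x, ⟪gradient (⇑p)
                (y - Matrix.toEuclideanCLM (𝕜 := ℝ) (NormedSpace.exp (t • A)) x
                  - Matrix.toEuclideanCLM (𝕜 := ℝ) Kt
                      (∫ x', x' ∂(ENNReal.ofReal lam • μ + ENNReal.ofReal (1 - lam) • ν))),
                Matrix.toEuclideanCLM (𝕜 := ℝ) Kt v⟫
              ∂(ENNReal.ofReal lam • μ + ENNReal.ofReal (1 - lam) • ν)) ∂μ)
          - ∫ v, (p (y - Matrix.toEuclideanCLM (𝕜 := ℝ) (NormedSpace.exp (t • A)) v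
              - Matrix.toEuclideanCLM (𝕜 := ℝ) Kt
                  (∫ x', x' ∂(ENNReal.ofReal lam • μ + ENNReal.ofReal (1 - lam) • ν)))
            - ∫ x, ⟪gradient (⇑p)
                (y - Matrix.toEuclideanCLM (𝕜 := ℝ) (NormedSpace.exp (t • A)) x
                  - Matrix.toEuclideanCLM (𝕜 := ℝ) Kt
                      (∫ x', x' ∂(ENNReal.ofReal lam • μ + ENNReal.ofReal (1 - lam) • ν))),
                Matrix.toEuclideanCLM (𝕜 := ℝ) Kt v⟫
              ∂(ENNReal.ofReal lam • μ + ENNReal.ofReal (1 - lam) • ν)) ∂ν) :=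
  stmt_14_general d t A Kt p y
end
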